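/- (Subject Congruence for capability typing) If C ≡ C' and Ψ ⊢ C, then Ψ ⊢ C'. -/

import Mathlib

open Classical

set_option maxHeartbeats 1000000

-- ===================== Base names =====================
abbrev TName := ℕ
abbrev Role := ℕ
abbrev Cap := ℕ
abbrev Session := ℕ
abbrev SvcChan := ℕ
abbrev Var := ℕ
abbrev MLabel := ℕ

-- ===================== Values, sorts, optional data, expressions =====================
inductive Val : Type
  | bool : Bool → Val
  | int : ℤ → Val
  | str : String → Val
deriving DecidableEq

inductive SortT : Type
  | bool | int | str
deriving DecidableEq

/-- Sort assignment for values. -/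
inductive ValSort : Val → SortT → Prop
  | bool (b : Bool) : ValSort (.bool b) .bool
  | int (n : ℤ) : ValSort (.int n) .int
  | str (s : String) : ValSort (.str s) .str

/-- Optional data: some value or none. -/
inductive OptData : Type
  | some : Val → OptData
  | none : OptData
deriving DecidableEq

/-- First-order expressions (abstracted as values or located variables). -/
inductive Expr : Type
  | val : OptData → Expr
  | var : Var → Expr
deriving DecidableEq

/-- Evaluation of (closed) expressions. -/
def evalE : Expr → Option OptData
  | .val d => Option.some d
  | .var _ => Option.none

/-- Substitution of optional data for a variable in an expression. -/
def Expr.substE (e : Expr) (x : Var) (d : OptData) : Expr :=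
  match e with
  | .var y => if y = x then .val d else .var y
  | .val v => .val v

def Expr.varsE : Expr → Finset Var
  | .var y => {y}
  | .val _ => ∅

-- ===================== Quality predicates =====================
/-- A quality predicate judges which (boolean vector of) participants suffice. -/
structure QPred where
  holds : List Bool → Prop

-- ===================== Annotated threads =====================
/-- Annotated thread t[A]{X;Y}: thread name, role, required capability X, offered capability Y. -/
structure AThread where
  t : TName
  role : Role
  pre : Cap
  post : Cap
deriving DecidableEq

def AThread.caps (p : AThread) : Finset Cap := {p.pre, p.post}

/-- Aggregation operators for reduce. -/
abbrev AggOp := List OptData → OptData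

-- ===================== GCQ interactions and choreographies =====================
inductive Interact : Type
  | init (actives services : List AThread) (a : SvcChan) (k : Session)
  | bcast (sender : AThread) (recvs : List (AThread × Var)) (q : QPred) (e : Expr) (k : Session)
  | reduce (senders : List (AThread × Expr)) (recv : AThread) (x : Var) (q : QPred)
      (k : Session) (op : AggOp)
  | sel (sender : AThread) (recvs : List AThread) (q : QPred) (k : Session) (l : MLabel)

def Interact.threadsI : Interact → Finset TName
  | .init as ss _ _ => ((as ++ ss).map (·.t)).toFinset
  | .bcast s rs _ _ _ => (s.t :: rs.map (·.1.t)).toFinset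
  | .reduce ss r _ _ _ _ => (r.t :: ss.map (·.1.t)).toFinset
  | .sel s rs _ _ _ => (s.t :: rs.map (·.t)).toFinset

def Interact.keyI : Interact → Session
  | .init _ _ _ k => k
  | .bcast _ _ _ _ k => k
  | .reduce _ _ _ _ k _ => k
  | .sel _ _ _ k _ => k

def Interact.rolesI : Interact → Finset Role
  | .init as ss _ _ => ((as ++ ss).map (·.role)).toFinset
  | .bcast s rs _ _ _ => (s.role :: rs.map (·.1.role)).toFinset
  | .reduce ss r _ _ _ _ => (r.role :: ss.map (·.1.role)).toFinset
  | .sel s rs _ _ _ => (s.role :: rs.map (·.role)).toFinset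

def Interact.capsI : Interact → Finset Cap
  | .init as ss _ _ => ((as ++ ss).map AThread.caps).foldr (· ∪ ·) ∅
  | .bcast s rs _ _ _ => s.caps ∪ ((rs.map (fun r => r.1.caps)).foldr (· ∪ ·) ∅)
  | .reduce ss r _ _ _ _ => r.caps ∪ ((ss.map (fun sr => sr.1.caps)).foldr (· ∪ ·) ∅)
  | .sel s rs _ _ _ => s.caps ∪ ((rs.map AThread.caps).foldr (· ∪ ·) ∅)

/-- Choreographies of the Global Quality Calculus. -/
inductive GChor : Type
  | act : Interact → GChor → GChor
  | cond : Expr → TName → GChor → GChor → GChor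
  | inact : GChor
  | res : ℕ → GChor → GChor

/-- Folding a list of restrictions on top of a choreography. -/
def GChor.resList (rs : List ℕ) (C : GChor) : GChor := rs.foldr .res C

/-- Restriction-free choreographies. -/
def RFree : GChor → Prop
  | .act _ C => RFree C
  | .cond _ _ C1 C2 => RFree C1 ∧ RFree C2
  | .inact => True
  | .res _ _ => False

/-- Substitution of optional data for the located variable x@p in an interaction. -/
def Interact.substI (η : Interact) (x : Var) (p : TName) (d : OptData) : Interact :=
  match η with
  | .bcast s rs q e k => .bcast s rs q (if s.t = p then e.substE x d else e) k
  | .reduce ss r y q k op =>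
      .reduce (ss.map (fun se => (se.1, if se.1.t = p then se.2.substE x d else se.2))) r y q k op
  | η => η

/-- Substitution of optional data for the located variable x@p in a choreography. -/
def GChor.subst : GChor → Var → TName → OptData → GChor
  | .act η C, x, p, d => .act (η.substI x p d) (GChor.subst C x p d)
  | .cond e t C1 C2, x, p, d =>
      .cond (if t = p then e.substE x d else e) t (GChor.subst C1 x p d) (GChor.subst C2 x p d)
  | .inact, _, _, _ => .inact
  | .res r C, x, p, d => .res r (GChor.subst C x p d)

def GChor.substMany (C : GChor) (l : List (Var × TName × OptData)) : GChor :=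
  l.foldl (fun c e => c.subst e.1 e.2.1 e.2.2) C

/-- Located variables of a choreography. -/
def Interact.varsI : Interact → Finset (Var × TName)
  | .init _ _ _ _ => ∅
  | .bcast s rs _ e _ =>
      (e.varsE.image (fun v => (v, s.t))) ∪ (rs.map (fun r => (r.2, r.1.t))).toFinset
  | .reduce ss r x _ _ _ =>
      insert (x, r.t) ((ss.map (fun sr => sr.2.varsE.image (fun v => (v, sr.1.t)))).foldr (· ∪ ·) ∅)
  | .sel _ _ _ _ _ => ∅

def GChor.vars : GChor → Finset (Var × TName)
  | .act η C => η.varsI ∪ C.vars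
  | .cond e p C1 C2 => e.varsE.image (fun v => (v, p)) ∪ C1.vars ∪ C2.vars
  | .inact => ∅
  | .res _ C => C.vars

/-- Capabilities annotated in a choreography. -/
def GChor.caps : GChor → Finset Cap
  | .act η C => η.capsI ∪ C.caps
  | .cond _ _ C1 C2 => C1.caps ∪ C2.caps
  | .inact => ∅
  | .res _ C => C.caps
-- ===================== States =====================
/-- A state: a finite set of triples (thread, session, capability). -/
abbrev GState := Finset (TName × Session × Cap)

def stLookup (σ : GState) (t : TName) (k : Session) : Finset Cap :=
  (σ.filter (fun e => e.1 = t ∧ e.2.1 = k)).image (·.2.2)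

/-- δ = the tuples of σ that are overridden by σ'. -/
def stDelta (σ σ' : GState) : GState :=
  σ.filter (fun e => (σ'.filter (fun y => y.1 = e.1 ∧ y.2.1 = e.2.1)).Nonempty)

/-- State update σ[σ'] = (σ \ δ) ∪ σ'. -/
def stUpdate (σ σ' : GState) : GState := (σ \ stDelta σ σ') ∪ σ'

/-- State update after a session initiation: all offered capabilities become available. -/
def initState (σ : GState) (k : Session) (ps : List AThread) : GState :=
  ps.foldl (fun s p => insert (p.t, k, p.post) s) σ

/-- State update after a collective interaction: each engaged thread exchanges
its required capability for the offered one. -/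
def stepState (σ : GState) (k : Session) (ps : List AThread) : GState :=
  ps.foldl (fun s p => insert (p.t, k, p.post) (s.erase (p.t, k, p.pre))) σ

-- ===================== Structural and swap congruence =====================
/-- Structural congruence on choreographies. -/
inductive StructCong : GChor → GChor → Prop
  | refl (C) : StructCong C C
  | symm : StructCong C C' → StructCong C' C
  | trans : StructCong C C' → StructCong C' C'' → StructCong C C''
  | resComm (x y C) : StructCong (.res x (.res y C)) (.res y (.res x C))
  | resInact (x) : StructCong (.res x .inact) .inact
  | actCong : StructCong C C' → StructCong (.act η C) (.act η C')
  | condCong : StructCong C1 C1' → StructCong C2 C2' →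
      StructCong (.cond e p C1 C2) (.cond e p C1' C2')
  | resCong : StructCong C C' → StructCong (.res x C) (.res x C')

/-- Swap congruence on choreographies. -/
inductive SwapCong : GChor → GChor → Prop
  | swapAct : Disjoint η.threadsI η'.threadsI →
      SwapCong (.act η (.act η' C)) (.act η' (.act η C))
  | swapCondAct : p ∉ η.threadsI →
      SwapCong (.cond e p (.act η C1) (.act η C2)) (.act η (.cond e p C1 C2))
  | swapCondCond : p ≠ r →
      SwapCong (.cond e p (.cond e' r C1 C2) (.cond e' r C1' C2'))
               (.cond e' r (.cond e p C1 C1') (.cond e p C2 C2'))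
  | refl (C) : SwapCong C C
  | symm : SwapCong C C' → SwapCong C' C
  | trans : SwapCong C C' → SwapCong C' C'' → SwapCong C C''
  | actCong : SwapCong C C' → SwapCong (.act η C) (.act η C')
  | condCong : SwapCong C1 C1' → SwapCong C2 C2' →
      SwapCong (.cond e p C1 C2) (.cond e p C1' C2')
  | resCong : SwapCong C C' → SwapCong (.res x C) (.res x C')

-- ===================== Labelled semantics of GCQ =====================
inductive GLabel : Type
  | tau : GLabel
  | act : Interact → GLabel

/-- Labelled transition semantics ⟨σ, C⟩ →λ ⟨σ', C'⟩ of the Global Quality Calculus. -/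
inductive GStep : GState → GChor → GLabel → GState → GChor → Prop
  | init {σ : GState} {as ss : List AThread} {a : SvcChan} {k : Session} {C : GChor} :
      GStep σ (.act (.init as ss a k) C) (.act (.init as ss a k))
        (initState σ k (as ++ ss)) (GChor.resList (k :: ss.map (·.t)) C)
  | bcast {σ : GState} {s : AThread} {rs J : List (AThread × Var)}
      {q : QPred} {e : Expr} {k : Session} {C : GChor} {d : OptData} :
      List.Sublist J rs →
      q.holds (rs.map (fun r => decide (r ∈ J))) →
      evalE e = Option.some d →
      (∀ p ∈ s :: J.map (·.1), (p.t, k, p.pre) ∈ σ) →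
      GStep σ (.act (.bcast s rs q e k) C) (.act (.bcast s rs q e k))
        (stepState σ k (s :: J.map (·.1)))
        (C.substMany (rs.map (fun r => (r.2, r.1.t, if r ∈ J then d else OptData.none))))
  | sel {σ : GState} {s : AThread} {rs J : List AThread}
      {q : QPred} {k : Session} {l : MLabel} {C : GChor} :
      List.Sublist J rs →
      q.holds (rs.map (fun r => decide (r ∈ J))) →
      (∀ p ∈ s :: J, (p.t, k, p.pre) ∈ σ) →
      GStep σ (.act (.sel s rs q k l) C) (.act (.sel s rs q k l))
        (stepState σ k (s :: J)) C
  | reduce {σ : GState} {ss J : List (AThread × Expr)} {r : AThread} {x : Var}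
      {q : QPred} {k : Session} {op : AggOp} {C : GChor} {ds : List OptData} {v : Val} :
      List.Sublist J ss →
      q.holds (ss.map (fun sr => decide (sr ∈ J))) →
      List.Forall₂ (fun (sr : AThread × Expr) (d : OptData) => evalE sr.2 = Option.some d) J ds →
      op ds = OptData.some v →
      (∀ p ∈ r :: J.map (·.1), (p.t, k, p.pre) ∈ σ) →
      GStep σ (.act (.reduce ss r x q k op) C) (.act (.reduce ss r x q k op))
        (stepState σ k (r :: J.map (·.1)))
        (C.subst x r.t (OptData.some v))
  | ifT {σ : GState} {e : Expr} {p : TName} {C1 C2 : GChor} :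
      evalE e = Option.some (.some (.bool true)) →
      GStep σ (.cond e p C1 C2) .tau σ C1
  | ifF {σ : GState} {e : Expr} {p : TName} {C1 C2 : GChor} :
      evalE e = Option.some (.some (.bool false)) →
      GStep σ (.cond e p C1 C2) .tau σ C2
  | res {σ σ' : GState} {C C' : GChor} {lab : GLabel} {r : ℕ} :
      GStep σ C lab σ' C' → GStep σ (.res r C) lab σ' (.res r C')
  | congEq {σ σ' : GState} {C C1 C2 C3 : GChor} {lab : GLabel} :
      StructCong C C1 → GStep σ C1 lab σ' C2 → StructCong C2 C3 →
      GStep σ C lab σ' C3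
  | congSwap {σ σ' : GState} {C C1 C2 C3 : GChor} {lab : GLabel} :
      SwapCong C C1 → GStep σ C1 lab σ' C2 → SwapCong C2 C3 →
      GStep σ C lab σ' C3

/-- Finite chains of labelled transitions. -/
inductive GSteps : GState → GChor → List GLabel → GState → GChor → Prop
  | refl (σ C) : GSteps σ C [] σ C
  | step : GStep σ C lab σ' C' → GSteps σ' C' labs σ'' C'' →
      GSteps σ C (lab :: labs) σ'' C''
-- ===================== Capability formulae and typing =====================
/-- Formulae of the multiplicative-additive fragment of intuitionistic linear logic
used as capability environments: ⊤, ownership types t : k[A]{X}, ⊗ and ⊕. -/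
inductive LFormula : Type
  | top : LFormula
  | own : TName → Session → Role → Cap → LFormula
  | tensor : LFormula → LFormula → LFormula
  | oplus : LFormula → LFormula → LFormula

/-- Well-formed formulae (formation rules TF1–TF5). -/
inductive FormulaWF : LFormula → Prop
  | top : FormulaWF .top
  | own (t k A X) : FormulaWF (.own t k A X)
  | tensor : FormulaWF φ → FormulaWF ψ → FormulaWF (.tensor φ ψ)
  | oplus : FormulaWF φ → FormulaWF ψ → FormulaWF (.oplus φ ψ)

def LFormula.threadsF : LFormula → Finset TName
  | .top => ∅
  | .own t _ _ _ => {t}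
  | .tensor a b => a.threadsF ∪ b.threadsF
  | .oplus a b => a.threadsF ∪ b.threadsF

def LFormula.keysF : LFormula → Finset Session
  | .top => ∅
  | .own _ k _ _ => {k}
  | .tensor a b => a.keysF ∪ b.keysF
  | .oplus a b => a.keysF ∪ b.keysF

def envThreads (Ψ : List LFormula) : Finset TName :=
  (Ψ.map LFormula.threadsF).foldr (· ∪ ·) ∅

def envKeys (Ψ : List LFormula) : Finset Session :=
  (Ψ.map LFormula.keysF).foldr (· ∪ ·) ∅

/-- State satisfaction of a single formula. -/
def SatF : GState → LFormula → Prop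
  | σ, .top => σ = σ
  | σ, .own t k _ X => (t, k, X) ∈ σ
  | σ, .tensor φ ψ => ∃ σ1 σ2 : GState, σ = σ1 ∪ σ2 ∧ Disjoint σ1 σ2 ∧ SatF σ1 φ ∧ SatF σ2 ψ
  | σ, .oplus φ ψ => SatF σ φ ∨ SatF σ ψ

/-- State satisfaction of a capability environment: σ ⊨ Ψ. -/
def SatEnv (σ : GState) (Ψ : List LFormula) : Prop := ∀ φ ∈ Ψ, SatF σ φ

/-- Removal Ψ \ δ of the ownership formulae corresponding to the tuples in δ. -/
noncomputable def envMinus (Ψ : List LFormula) (δ : GState) : List LFormula :=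
  Ψ.filter (fun φ => decide (¬ ∃ t k A X, φ = LFormula.own t k A X ∧ (t, k, X) ∈ δ))

/-- Provability in the multiplicative-additive fragment of intuitionistic linear logic. -/
inductive ILLProv : List LFormula → LFormula → Prop
  | id (φ) : ILLProv [φ] φ
  | topR (Γ) : ILLProv Γ .top
  | tensorR : ILLProv Γ φ → ILLProv Δ ψ → ILLProv (Γ ++ Δ) (.tensor φ ψ)
  | tensorL : ILLProv (φ :: ψ :: Γ) χ → ILLProv (.tensor φ ψ :: Γ) χ
  | oplusR1 : ILLProv Γ φ → ILLProv Γ (.oplus φ ψ)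
  | oplusR2 : ILLProv Γ ψ → ILLProv Γ (.oplus φ ψ)
  | oplusL : ILLProv (φ :: Γ) χ → ILLProv (ψ :: Γ) χ → ILLProv (.oplus φ ψ :: Γ) χ
  | exch : List.Perm Γ Δ → ILLProv Γ φ → ILLProv Δ φ

/-- Ownership formula for the required capability of an annotated thread. -/
def ownPre (k : Session) (p : AThread) : LFormula := .own p.t k p.role p.pre

/-- Ownership formula for the offered capability of an annotated thread. -/
def ownPost (k : Session) (p : AThread) : LFormula := .own p.t k p.role p.post

def tensorList : List LFormula → LFormula
  | [] => .top
  | [φ] => φ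
  | φ :: φs => .tensor φ (tensorList φs)

/-- The capability type system Ψ ⊢ C. -/
inductive CapTyped : List LFormula → GChor → Prop
  | inact (Ψ) : CapTyped Ψ .inact
  | init {Ψ : List LFormula} {as ss : List AThread} {a : SvcChan} {k : Session} {C : GChor} :
      (∀ p ∈ ss, p.t ∉ envThreads Ψ) →
      k ∉ envKeys Ψ →
      CapTyped (Ψ ++ (as ++ ss).map (ownPost k)) C →
      CapTyped Ψ (.act (.init as ss a k) C)
  | bcast {Ψ : List LFormula} {s : AThread} {rs : List (AThread × Var)}
      {q : QPred} {e : Expr} {k : Session} {C : GChor}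
      (split : List (AThread × Var) → List LFormula × List LFormula) :
      (∃ J, List.Sublist J rs ∧ q.holds (rs.map (fun r => decide (r ∈ J)))) →
      (∀ J, List.Sublist J rs → q.holds (rs.map (fun r => decide (r ∈ J))) →
        List.Perm ((split J).1 ++ (split J).2) Ψ ∧
          ILLProv (split J).1 (tensorList (ownPre k s :: J.map (fun r => ownPre k r.1)))) →
      (∀ J, List.Sublist J rs → q.holds (rs.map (fun r => decide (r ∈ J))) →
          CapTyped ((ownPost k s :: J.map (fun r => ownPost k r.1)) ++ (split J).2) C) →
      CapTyped Ψ (.act (.bcast s rs q e k) C)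
  | reduce {Ψ : List LFormula} {ss : List (AThread × Expr)} {r : AThread} {x : Var}
      {q : QPred} {k : Session} {op : AggOp} {C : GChor}
      (split : List (AThread × Expr) → List LFormula × List LFormula) :
      (∃ J, List.Sublist J ss ∧ q.holds (ss.map (fun sr => decide (sr ∈ J)))) →
      (∀ J, List.Sublist J ss → q.holds (ss.map (fun sr => decide (sr ∈ J))) →
        List.Perm ((split J).1 ++ (split J).2) Ψ ∧
          ILLProv (split J).1 (tensorList (ownPre k r :: J.map (fun sr => ownPre k sr.1)))) →
      (∀ J, List.Sublist J ss → q.holds (ss.map (fun sr => decide (sr ∈ J))) →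
          CapTyped ((ownPost k r :: J.map (fun sr => ownPost k sr.1)) ++ (split J).2) C) →
      CapTyped Ψ (.act (.reduce ss r x q k op) C)
  | sel {Ψ : List LFormula} {s : AThread} {rs : List AThread}
      {q : QPred} {k : Session} {l : MLabel} {C : GChor}
      (split : List AThread → List LFormula × List LFormula) :
      (∃ J, List.Sublist J rs ∧ q.holds (rs.map (fun r => decide (r ∈ J)))) →
      (∀ J, List.Sublist J rs → q.holds (rs.map (fun r => decide (r ∈ J))) →
        List.Perm ((split J).1 ++ (split J).2) Ψ ∧
          ILLProv (split J).1 (tensorList (ownPre k s :: J.map (ownPre k)))) →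
      (∀ J, List.Sublist J rs → q.holds (rs.map (fun r => decide (r ∈ J))) →
          CapTyped ((ownPost k s :: J.map (ownPost k)) ++ (split J).2) C) →
      CapTyped Ψ (.act (.sel s rs q k l) C)
  | cond {Ψ : List LFormula} {e : Expr} {p : TName} {C1 C2 : GChor} :
      CapTyped Ψ C1 → CapTyped Ψ C2 → CapTyped Ψ (.cond e p C1 C2)
  | res {Ψ : List LFormula} {x : ℕ} {C : GChor} :
      CapTyped Ψ C → CapTyped Ψ (.res x C)
-- ===================== Global (session) types =====================
inductive GType : Type
  | bcastT : Role → List Role → SortT → GType → GType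
  | redT : List Role → Role → SortT → GType → GType
  | branchT : Role → List Role → List (MLabel × GType) → GType
  | endT : GType

/-- Swap relation ≃_T on global types. -/
inductive GTSwap : GType → GType → Prop
  | bcBc {A C : Role} {Bs Ds : List Role} {S S' : SortT} {G : GType} :
      Disjoint (insert A Bs.toFinset) (insert C Ds.toFinset) →
      GTSwap (.bcastT A Bs S (.bcastT C Ds S' G)) (.bcastT C Ds S' (.bcastT A Bs S G))
  | bcRd {A D : Role} {Bs Cs : List Role} {S S' : SortT} {G : GType} :
      Disjoint (insert A Bs.toFinset) (insert D Cs.toFinset) →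
      GTSwap (.bcastT A Bs S (.redT Cs D S' G)) (.redT Cs D S' (.bcastT A Bs S G))
  | bcBr {A C : Role} {Bs Ds : List Role} {S : SortT} {ls : List (MLabel × GType)} :
      Disjoint (insert A Bs.toFinset) (insert C Ds.toFinset) →
      GTSwap (.bcastT A Bs S (.branchT C Ds ls))
             (.branchT C Ds (ls.map (fun p => (p.1, GType.bcastT A Bs S p.2))))
  | rdBr {B C : Role} {As Ds : List Role} {S : SortT} {ls : List (MLabel × GType)} :
      Disjoint (insert B As.toFinset) (insert C Ds.toFinset) →
      GTSwap (.redT As B S (.branchT C Ds ls))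
             (.branchT C Ds (ls.map (fun p => (p.1, GType.redT As B S p.2))))
  | rdRd {B D : Role} {As Cs : List Role} {S S' : SortT} {G : GType} :
      Disjoint (insert B As.toFinset) (insert D Cs.toFinset) →
      GTSwap (.redT As B S (.redT Cs D S' G)) (.redT Cs D S' (.redT As B S G))
  | brBr {A C : Role} {Bs Ds : List Role} {lsI lsJ : List MLabel} {M : List (List GType)} :
      Disjoint (insert A Bs.toFinset) (insert C Ds.toFinset) →
      GTSwap (.branchT A Bs (lsI.zip (M.map (fun row => GType.branchT C Ds (lsJ.zip row)))))
             (.branchT C Ds (lsJ.zip (M.transpose.map (fun col => GType.branchT A Bs (lsI.zip col)))))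
  | refl (G) : GTSwap G G
  | symm : GTSwap G G' → GTSwap G' G
  | trans : GTSwap G G' → GTSwap G' G'' → GTSwap G G''
  | bcastCong : GTSwap G G' → GTSwap (.bcastT A Bs S G) (.bcastT A Bs S G')
  | redCong : GTSwap G G' → GTSwap (.redT As B S G) (.redT As B S G')
  | branchCong {A : Role} {Bs : List Role} {ls ls' : List (MLabel × GType)} :
      ls.map Prod.fst = ls'.map Prod.fst →
      List.Forall₂ GTSwap (ls.map Prod.snd) (ls'.map Prod.snd) →
      GTSwap (.branchT A Bs ls) (.branchT A Bs ls')

/-- Actions of global types. -/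
inductive TAction : Type
  | bcast : Role → List Role → SortT → TAction
  | red : List Role → Role → SortT → TAction
  | sel : Role → List Role → MLabel → TAction

/-- Labelled transitions of global types G →α G'. -/
inductive GTypeStep : GType → TAction → GType → Prop
  | bcast {A : Role} {Bs : List Role} {S : SortT} {G : GType} :
      GTypeStep (.bcastT A Bs S G) (.bcast A Bs S) G
  | red {As : List Role} {B : Role} {S : SortT} {G : GType} :
      GTypeStep (.redT As B S G) (.red As B S) G
  | branch {A : Role} {Bs : List Role} {ls : List (MLabel × GType)} {l : MLabel} {G : GType} :
      (l, G) ∈ ls → GTypeStep (.branchT A Bs ls) (.sel A Bs l) G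
  | swap {G1 G1' G2 G2' : GType} {α : TAction} :
      GTSwap G1 G1' → GTypeStep G1' α G2' → GTSwap G2' G2 → GTypeStep G1 α G2

-- ===================== Typing environments for session types =====================
inductive GammaEntry : Type
  | svc : SvcChan → GType → List Role → List Role → GammaEntry
  | vsort : Var → TName → SortT → GammaEntry
  | owner : TName → Session → Role → GammaEntry

abbrev GEnv := List GammaEntry

/-- The session environment Δ: sessions mapped to global types. -/
abbrev SEnv := List (Session × GType)

def GammaEntry.mentionsThread : GammaEntry → TName → Prop
  | .svc _ _ _ _, _ => False
  | .vsort _ p _, t => p = t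
  | .owner p _ _, t => p = t

/-- Sorting of expressions located at a thread. -/
inductive HasSort : GEnv → Expr → TName → SortT → Prop
  | some {Γ : GEnv} {v : Val} {S : SortT} {p : TName} :
      ValSort v S → HasSort Γ (.val (.some v)) p S
  | none {Γ : GEnv} {S : SortT} {p : TName} : HasSort Γ (.val .none) p S
  | var {Γ : GEnv} {x : Var} {p : TName} {S : SortT} :
      GammaEntry.vsort x p S ∈ Γ → HasSort Γ (.var x) p S

/-- The global-type judgment Γ ⊢ C ▷ Δ. -/
inductive SesTyped : GEnv → GChor → SEnv → Prop
  | inact {Γ : GEnv} {Δ : SEnv} :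
      (∀ e ∈ Δ, e.2 = GType.endT) → SesTyped Γ .inact Δ
  | init {Γ : GEnv} {as ss : List AThread} {a : SvcChan} {k : Session} {C : GChor}
      {Δ : SEnv} {G : GType} :
      GammaEntry.svc a G (as.map (·.role)) (ss.map (·.role)) ∈ Γ →
      (∀ p ∈ ss, ∀ en ∈ Γ, ¬ en.mentionsThread p.t) →
      SesTyped (Γ ++ (as ++ ss).map (fun p => GammaEntry.owner p.t k p.role)) C ((k, G) :: Δ) →
      SesTyped Γ (.act (.init as ss a k) C) Δ
  | bcast {Γ : GEnv} {s : AThread} {rs : List (AThread × Var)} {q : QPred} {e : Expr}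
      {k : Session} {C : GChor} {Δ : SEnv} {S : SortT} {G : GType} :
      GammaEntry.owner s.t k s.role ∈ Γ →
      (∀ r ∈ rs, GammaEntry.owner r.1.t k r.1.role ∈ Γ) →
      HasSort Γ e s.t S →
      SesTyped (Γ ++ rs.map (fun r => GammaEntry.vsort r.2 r.1.t S)) C ((k, G) :: Δ) →
      SesTyped Γ (.act (.bcast s rs q e k) C)
        ((k, GType.bcastT s.role (rs.map (·.1.role)) S G) :: Δ)
  | reduce {Γ : GEnv} {ss : List (AThread × Expr)} {r : AThread} {x : Var} {q : QPred}
      {k : Session} {op : AggOp} {C : GChor} {Δ : SEnv} {S : SortT} {G : GType} :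
      GammaEntry.owner r.t k r.role ∈ Γ →
      (∀ sr ∈ ss, GammaEntry.owner sr.1.t k sr.1.role ∈ Γ) →
      (∀ sr ∈ ss, HasSort Γ sr.2 sr.1.t S) →
      SesTyped (Γ ++ [GammaEntry.vsort x r.t S]) C ((k, G) :: Δ) →
      SesTyped Γ (.act (.reduce ss r x q k op) C)
        ((k, GType.redT (ss.map (·.1.role)) r.role S G) :: Δ)
  | sel {Γ : GEnv} {s : AThread} {rs : List AThread} {q : QPred} {k : Session}
      {l : MLabel} {C : GChor} {Δ : SEnv} {ls : List (MLabel × GType)} {G : GType} :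
      GammaEntry.owner s.t k s.role ∈ Γ →
      (∀ r ∈ rs, GammaEntry.owner r.t k r.role ∈ Γ) →
      (l, G) ∈ ls →
      SesTyped Γ C ((k, G) :: Δ) →
      SesTyped Γ (.act (.sel s rs q k l) C)
        ((k, GType.branchT s.role (rs.map (·.role)) ls) :: Δ)
  | cond {Γ : GEnv} {e : Expr} {p : TName} {C1 C2 : GChor} {Δ : SEnv} :
      HasSort Γ e p .bool → SesTyped Γ C1 Δ → SesTyped Γ C2 Δ →
      SesTyped Γ (.cond e p C1 C2) Δ
  | res {Γ : GEnv} {x : ℕ} {C : GChor} {Δ : SEnv} :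
      SesTyped Γ C Δ → SesTyped Γ (.res x C) Δ
  | perm {Γ : GEnv} {C : GChor} {Δ Δ' : SEnv} :
      SesTyped Γ C Δ → List.Perm Δ Δ' → SesTyped Γ C Δ'

/-- The full session typing judgment Γ; Ψ ⊢ C ▷ Δ (rule TG). -/
def FullTyped (Γ : GEnv) (Ψ : List LFormula) (C : GChor) (Δ : SEnv) : Prop :=
  CapTyped Ψ C ∧ SesTyped Γ C Δ

/-- Transition Δ →^{k:α} Δ' of session environments. -/
def SEnvStep (Δ : SEnv) (k : Session) (α : TAction) (Δ' : SEnv) : Prop :=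
  ∃ G G', (k, G) ∈ Δ ∧ GTypeStep G α G' ∧
    Δ' = Δ.map (fun e => if e.1 = k then (k, G') else e)

/-- Label typing λ ▷ k : α, relating choreography transition labels
to global-type actions. -/
inductive LabelTyped : GLabel → Session → TAction → Prop
  | bcast {s : AThread} {rs : List (AThread × Var)} {q : QPred} {e : Expr}
      {k : Session} (S : SortT) :
      LabelTyped (.act (.bcast s rs q e k)) k (.bcast s.role (rs.map (·.1.role)) S)
  | reduce {ss : List (AThread × Expr)} {r : AThread} {x : Var} {q : QPred}
      {k : Session} {op : AggOp} (S : SortT) :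
      LabelTyped (.act (.reduce ss r x q k op)) k (.red (ss.map (·.1.role)) r.role S)
  | sel {s : AThread} {rs : List AThread} {q : QPred} {k : Session} {l : MLabel} :
      LabelTyped (.act (.sel s rs q k l)) k (.sel s.role (rs.map (·.role)) l)
-- ===================== The Endpoint Quality Calculus (EPQ) =====================
/-- Payloads travelling in session queues: data or labels. -/
inductive WVal : Type
  | data : OptData → WVal
  | lab : MLabel → WVal

/-- Queue messages: one sender to many receivers, or many senders to one receiver. -/
inductive QMsg : Type
  | toMany : Role → QPred → List (Role × Bool) → WVal → QMsg
  | toOne : QPred → List (Role × Bool × OptData) → Role → QMsg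

/-- Endpoint processes of EPQ. -/
inductive EP : Type
  | req : SvcChan → List Role → Session → EP → EP            -- ā[C̃](k).P
  | acc : SvcChan → Role → Session → EP → EP                 -- a[A](k).P
  | srv : SvcChan → Role → Session → EP → EP                 -- !a[A](k).P
  | bcastOut : Session → Role → List Role → QPred → Expr → EP → EP
  | bcastIn : Session → Role → Role → Var → EP → EP          -- k[B]?[A](x).P
  | redIn : Session → List Role → Role → QPred → Var → AggOp → EP → EP
  | redOut : Session → Role → Role → Expr → EP → EP          -- k[A]![B]⟨e⟩.P
  | selOut : Session → Role → List Role → QPred → MLabel → EP → EP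
  | branchIn : Session → Role → Role → List (MLabel × EP) → EP
  | waitIn : Session → List Role → Role → AggOp → Var → EP → EP
  | waitOut : Session → Role → List Role → EP → EP
  | cond : Expr → EP → EP → EP
  | inact : EP
  | par : EP → EP → EP
  | res : ℕ → EP → EP
  | queue : Session → List QMsg → EP

def parList (Ps : List EP) : EP := Ps.foldr .par .inact

def EP.resList (rs : List ℕ) (P : EP) : EP := rs.foldr .res P

/-- Immediate subterm relation on endpoint processes. -/
inductive Sub1 : EP → EP → Prop
  | req : Sub1 (.req a rs k P) P
  | acc : Sub1 (.acc a A k P) P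
  | srv : Sub1 (.srv a A k P) P
  | bcastOut : Sub1 (.bcastOut k A Bs q e P) P
  | bcastIn : Sub1 (.bcastIn k B A x P) P
  | redIn : Sub1 (.redIn k As B q x op P) P
  | redOut : Sub1 (.redOut k A B e P) P
  | selOut : Sub1 (.selOut k A Bs q l P) P
  | branchIn : (l, P) ∈ ls → Sub1 (.branchIn k B A ls) P
  | waitIn : Sub1 (.waitIn k As B op x P) P
  | waitOut : Sub1 (.waitOut k A Bs P) P
  | condL : Sub1 (.cond e P Q) P
  | condR : Sub1 (.cond e P Q) Q
  | parL : Sub1 (.par P Q) P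
  | parR : Sub1 (.par P Q) Q
  | res : Sub1 (.res r P) P

/-- Subterm relation. -/
def Contains : EP → EP → Prop := Relation.ReflTransGen Sub1

/-- Names occurring at the head of a process. -/
def EP.topNames : EP → Finset ℕ
  | .req a _ k _ => {a, k}
  | .acc a _ k _ => {a, k}
  | .srv a _ k _ => {a, k}
  | .bcastOut k _ _ _ _ _ => {k}
  | .bcastIn k _ _ _ _ => {k}
  | .redIn k _ _ _ _ _ _ => {k}
  | .redOut k _ _ _ _ => {k}
  | .selOut k _ _ _ _ _ => {k}
  | .branchIn k _ _ _ => {k}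
  | .waitIn k _ _ _ _ _ => {k}
  | .waitOut k _ _ _ => {k}
  | .cond _ _ _ => ∅
  | .inact => ∅
  | .par _ _ => ∅
  | .res _ _ => ∅
  | .queue k _ => {k}

/-- Subterm relation that does not cross a binder for the name r. -/
def ContainsFree (r : ℕ) : EP → EP → Prop :=
  Relation.ReflTransGen (fun P Q => Sub1 P Q ∧ ∀ b, P ≠ EP.res r b)

/-- The name r occurs free in P. -/
def FreeName (r : ℕ) (P : EP) : Prop :=
  ∃ Q, ContainsFree r P Q ∧ r ∈ Q.topNames

/-- Independence of queue messages (different senders or disjoint receivers). -/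
def QMsg.indep : QMsg → QMsg → Prop
  | .toMany A _ rs _, .toMany C _ ds _ =>
      A ≠ C ∨ Disjoint (rs.map (·.1)).toFinset (ds.map (·.1)).toFinset
  | .toOne _ ss B, .toOne _ cs D =>
      B ≠ D ∨ Disjoint (ss.map (·.1)).toFinset (cs.map (·.1)).toFinset
  | _, _ => False

/-- Structural congruence of endpoint processes. -/
inductive EEquiv : EP → EP → Prop
  | refl (P) : EEquiv P P
  | symm : EEquiv P Q → EEquiv Q P
  | trans : EEquiv P Q → EEquiv Q R → EEquiv P R
  | parComm (P Q) : EEquiv (.par P Q) (.par Q P)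
  | parAssoc (P Q R) : EEquiv (.par (.par P Q) R) (.par P (.par Q R))
  | parInact (P) : EEquiv (.par P .inact) P
  | resInact (r) : EEquiv (.res r .inact) .inact
  | resComm (r s P) : EEquiv (.res r (.res s P)) (.res s (.res r P))
  | resPar : ¬ FreeName r Q → EEquiv (.res r (.par P Q)) (.par (.res r P) Q)
  | queueSwap : QMsg.indep m1 m2 →
      EEquiv (.queue k (h ++ m1 :: m2 :: h')) (.queue k (h ++ m2 :: m1 :: h'))
  | parCong : EEquiv P P' → EEquiv Q Q' → EEquiv (.par P Q) (.par P' Q')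
  | resCong : EEquiv P P' → EEquiv (.res r P) (.res r P')

/-- Substitution of optional data for a variable in an endpoint process. -/
inductive SubstEP (x : Var) (d : OptData) : EP → EP → Prop
  | req : SubstEP x d P P' → SubstEP x d (.req a rs k P) (.req a rs k P')
  | acc : SubstEP x d P P' → SubstEP x d (.acc a A k P) (.acc a A k P')
  | srv : SubstEP x d P P' → SubstEP x d (.srv a A k P) (.srv a A k P')
  | bcastOut : SubstEP x d P P' →
      SubstEP x d (.bcastOut k A Bs q e P) (.bcastOut k A Bs q (e.substE x d) P')
  | bcastInShadow : SubstEP x d (.bcastIn k B A x P) (.bcastIn k B A x P)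
  | bcastIn : y ≠ x → SubstEP x d P P' →
      SubstEP x d (.bcastIn k B A y P) (.bcastIn k B A y P')
  | redInShadow : SubstEP x d (.redIn k As B q x op P) (.redIn k As B q x op P)
  | redIn : y ≠ x → SubstEP x d P P' →
      SubstEP x d (.redIn k As B q y op P) (.redIn k As B q y op P')
  | redOut : SubstEP x d P P' →
      SubstEP x d (.redOut k A B e P) (.redOut k A B (e.substE x d) P')
  | selOut : SubstEP x d P P' → SubstEP x d (.selOut k A Bs q l P) (.selOut k A Bs q l P')
  | branchIn : ls.map Prod.fst = ls'.map Prod.fst →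
      List.Forall₂ (SubstEP x d) (ls.map Prod.snd) (ls'.map Prod.snd) →
      SubstEP x d (.branchIn k B A ls) (.branchIn k B A ls')
  | waitInShadow : SubstEP x d (.waitIn k As B op x P) (.waitIn k As B op x P)
  | waitIn : y ≠ x → SubstEP x d P P' →
      SubstEP x d (.waitIn k As B op y P) (.waitIn k As B op y P')
  | waitOut : SubstEP x d P P' → SubstEP x d (.waitOut k A Bs P) (.waitOut k A Bs P')
  | cond : SubstEP x d P P' → SubstEP x d Q Q' →
      SubstEP x d (.cond e P Q) (.cond (e.substE x d) P' Q')
  | inact : SubstEP x d .inact .inact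
  | par : SubstEP x d P P' → SubstEP x d Q Q' → SubstEP x d (.par P Q) (.par P' Q')
  | res : SubstEP x d P P' → SubstEP x d (.res r P) (.res r P')
  | queue : SubstEP x d (.queue k h) (.queue k h)
-- ===================== Labelled semantics of EPQ =====================
inductive ELabel : Type
  | tau : ELabel
  | start : List Role → List Role → SvcChan → Session → ELabel
  | bcastO : Role → List Role → QPred → Session → OptData → ELabel
  | bcastI : Role → Role → Session → OptData → ELabel
  | redO : Role → Role → Session → OptData → ELabel
  | redI : List Role → Role → QPred → Session → OptData → ELabel
  | selO : Role → List Role → QPred → Session → MLabel → ELabel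
  | selI : Role → Role → Session → MLabel → ELabel
  | enqO : ELabel   -- ↓τ
  | enqI : ELabel   -- ↑τ

/-- Shape of the single-use accepts participating in a session initiation. -/
inductive AccForm (a : SvcChan) (k : Session) : List Role → List EP → List EP → Prop
  | nil : AccForm a k [] [] []
  | cons : AccForm a k As Qs Ps →
      AccForm a k (A :: As) (EP.acc a A k P :: Qs) (P :: Ps)

/-- Shape of the replicated services participating in a session initiation. -/
inductive SrvForm (a : SvcChan) (k : Session) : List Role → List EP → List EP → Prop
  | nil : SrvForm a k [] [] []
  | cons : SrvForm a k Bs Qs Ps →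
      SrvForm a k (B :: Bs) (EP.srv a B k P :: Qs) (P :: Ps)

def markRecv (rs : List (Role × Bool)) (B : Role) : List (Role × Bool) :=
  rs.map (fun r => if r.1 = B then (r.1, true) else r)

def markSender (ss : List (Role × Bool × OptData)) (A : Role) (d : OptData) :
    List (Role × Bool × OptData) :=
  ss.map (fun s => if s.1 = A then (s.1, true, d) else s)

/-- Receivers of a broadcast which have not yet collected the message,
together with their none-substituted continuations. -/
inductive BcRem (k : Session) (A : Role) :
    List (Role × Bool) → List EP → List EP → Prop
  | nil : BcRem k A [] [] []
  | done : BcRem k A rs Ps Qs → BcRem k A ((B, true) :: rs) Ps Qs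
  | todo : BcRem k A rs Ps Qs → SubstEP x OptData.none P P' →
      BcRem k A ((B, false) :: rs) (EP.bcastIn k B A x P :: Ps) (P' :: Qs)

/-- Receivers of a selection which have not yet collected the label. -/
inductive BrRem (k : Session) (A : Role) (l : MLabel) :
    List (Role × Bool) → List EP → Prop
  | nil : BrRem k A l [] []
  | done : BrRem k A l rs Ps → BrRem k A l ((B, true) :: rs) Ps
  | todo : BrRem k A l rs Ps → (l, P) ∈ ls →
      BrRem k A l ((B, false) :: rs) (EP.branchIn k B A ls :: Ps)

/-- Senders of a reduce which have not yet contributed,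
together with their continuations. -/
inductive RdRem (k : Session) (B : Role) :
    List (Role × Bool × OptData) → List EP → List EP → Prop
  | nil : RdRem k B [] [] []
  | done : RdRem k B ss Ps Qs → RdRem k B ((A, true, d) :: ss) Ps Qs
  | todo : RdRem k B ss Ps Qs →
      RdRem k B ((A, false, d) :: ss) (EP.redOut k A B e P :: Ps) (P :: Qs)

/-- Labelled operational semantics of the Endpoint Quality Calculus. -/
inductive EStep : EP → ELabel → EP → Prop
  | init {a : SvcChan} {k : Session} {A : Role} {As Bs : List Role}
      {P : EP} {accs Ps srvs Qs : List EP} :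
      AccForm a k As accs Ps → SrvForm a k Bs srvs Qs →
      EStep (.par (.req a (A :: As ++ Bs) k P) (.par (parList accs) (parList srvs)))
        (.start (A :: As) Bs a k)
        (.par (.res k (parList (P :: Ps ++ Qs ++ [EP.queue k []]))) (parList srvs))
  | bcO {k : Session} {A : Role} {Bs : List Role} {q : QPred} {e : Expr}
      {P : EP} {h : List QMsg} {d : OptData} :
      evalE e = Option.some d →
      EStep (.par (.bcastOut k A Bs q e P) (.queue k h)) .enqO
        (.par (.waitOut k A Bs P)
          (.queue k (h ++ [QMsg.toMany A q (Bs.map (fun B => (B, false))) (.data d)])))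
  | bcI {k : Session} {Bi A : Role} {x : Var} {P P' : EP} {q : QPred}
      {recvs : List (Role × Bool)} {sb : OptData} {h : List QMsg} :
      (Bi, false) ∈ recvs →
      SubstEP x sb P P' →
      EStep (.par (.bcastIn k Bi A x P) (.queue k (QMsg.toMany A q recvs (.data sb) :: h)))
        (.bcastI A Bi k sb)
        (.par P' (.queue k (QMsg.toMany A q (markRecv recvs Bi) (.data sb) :: h)))
  | rdO {k : Session} {Ai B : Role} {e : Expr} {P : EP} {q : QPred}
      {senders : List (Role × Bool × OptData)} {h : List QMsg} {v : Val} :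
      evalE e = Option.some (OptData.some v) →
      (∃ old, (Ai, false, old) ∈ senders) →
      EStep (.par (.redOut k Ai B e P) (.queue k (QMsg.toOne q senders B :: h)))
        (.redO Ai B k (.some v))
        (.par P (.queue k (QMsg.toOne q (markSender senders Ai (.some v)) B :: h)))
  | rdI {k : Session} {As : List Role} {B : Role} {q : QPred} {x : Var}
      {op : AggOp} {P : EP} {h : List QMsg} :
      EStep (.par (.redIn k As B q x op P) (.queue k h)) .enqI
        (.par (.waitIn k As B op x P)
          (.queue k (h ++ [QMsg.toOne q (As.map (fun A => (A, false, OptData.none))) B])))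
  | sel {k : Session} {A : Role} {Bs : List Role} {q : QPred} {l : MLabel}
      {P : EP} {h : List QMsg} :
      EStep (.par (.selOut k A Bs q l P) (.queue k h)) .enqO
        (.par (.waitOut k A Bs P)
          (.queue k (h ++ [QMsg.toMany A q (Bs.map (fun B => (B, false))) (.lab l)])))
  | br {k : Session} {Bi A : Role} {ls : List (MLabel × EP)} {q : QPred}
      {recvs : List (Role × Bool)} {l : MLabel} {h : List QMsg} {Pj : EP} :
      (l, Pj) ∈ ls → (Bi, false) ∈ recvs →
      EStep (.par (.branchIn k Bi A ls) (.queue k (QMsg.toMany A q recvs (.lab l) :: h)))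
        (.selI A Bi k l)
        (.par Pj (.queue k (QMsg.toMany A q (markRecv recvs Bi) (.lab l) :: h)))
  | waitB {k : Session} {A : Role} {Bs : List Role} {q : QPred}
      {recvs : List (Role × Bool)} {sb : OptData} {h : List QMsg}
      {P : EP} {rems conts : List EP} :
      q.holds (recvs.map (·.2)) →
      BcRem k A recvs rems conts →
      EStep (.par (.waitOut k A Bs P)
          (.par (.queue k (QMsg.toMany A q recvs (.data sb) :: h)) (parList rems)))
        (.bcastO A Bs q k sb)
        (.par P (.par (.queue k h) (parList conts)))
  | waitS {k : Session} {A : Role} {Bs : List Role} {q : QPred}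
      {recvs : List (Role × Bool)} {l : MLabel} {h : List QMsg}
      {P : EP} {rems : List EP} :
      q.holds (recvs.map (·.2)) →
      BrRem k A l recvs rems →
      EStep (.par (.waitOut k A Bs P)
          (.par (.queue k (QMsg.toMany A q recvs (.lab l) :: h)) (parList rems)))
        (.selO A Bs q k l)
        (.par P (.queue k h))
  | waitI {k : Session} {As : List Role} {B : Role} {q : QPred}
      {senders : List (Role × Bool × OptData)} {h : List QMsg}
      {op : AggOp} {x : Var} {P P' : EP} {v : Val} {rems conts : List EP} :
      q.holds (senders.map (·.2.1)) →
      op (senders.map (·.2.2)) = OptData.some v →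
      SubstEP x (OptData.some v) P P' →
      RdRem k B senders rems conts →
      EStep (.par (.waitIn k As B op x P)
          (.par (.queue k (QMsg.toOne q senders B :: h)) (parList rems)))
        (.redI As B q k (.some v))
        (.par P' (.par (.queue k h) (parList conts)))
  | ifT {e : Expr} {P Q : EP} :
      evalE e = Option.some (.some (.bool true)) → EStep (.cond e P Q) .tau P
  | ifF {e : Expr} {P Q : EP} :
      evalE e = Option.some (.some (.bool false)) → EStep (.cond e P Q) .tau Q
  | resS {P P' : EP} {μ : ELabel} {r : ℕ} :
      EStep P μ P' → EStep (.res r P) μ (.res r P')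
  | parS {P P' Q : EP} {μ : ELabel} :
      EStep P μ P' → EStep (.par P Q) μ (.par P' Q)
  | str {P P1 Q1 Q : EP} {μ : ELabel} :
      EEquiv P P1 → EStep P1 μ Q1 → EEquiv Q1 Q → EStep P μ Q

/-- Finite chains of endpoint transitions. -/
inductive ESteps : EP → List ELabel → EP → Prop
  | refl (P) : ESteps P [] P
  | step : EStep P μ Q → ESteps Q μs R → ESteps P (μ :: μs) R
-- ===================== Merging =====================
/-- The merge operator P ⊔ Q = R on endpoint processes (as a relation). -/
inductive Merge : EP → EP → EP → Prop
  | refl (P) : Merge P P P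
  | branch {k : Session} {B A : Role} {ls1 ls2 ls3 : List (MLabel × EP)}
      (f : EP → EP → EP) :
      (∀ l P, (l, P) ∈ ls1 → (∀ Q, (l, Q) ∉ ls2) → (l, P) ∈ ls3) →
      (∀ l Q, (l, Q) ∈ ls2 → (∀ P, (l, P) ∉ ls1) → (l, Q) ∈ ls3) →
      (∀ l P Q, (l, P) ∈ ls1 → (l, Q) ∈ ls2 → Merge P Q (f P Q)) →
      (∀ l P Q, (l, P) ∈ ls1 → (l, Q) ∈ ls2 → (l, f P Q) ∈ ls3) →
      (∀ l R, (l, R) ∈ ls3 → (∃ P, (l, P) ∈ ls1) ∨ (∃ Q, (l, Q) ∈ ls2)) →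
      Merge (.branchIn k B A ls1) (.branchIn k B A ls2) (.branchIn k B A ls3)
  | equivL : EEquiv P P' → Merge P' Q R → Merge P Q R
  | equivR : EEquiv Q Q' → Merge P Q' R → Merge P Q R
  | req : Merge P Q R → Merge (.req a rs k P) (.req a rs k Q) (.req a rs k R)
  | acc : Merge P Q R → Merge (.acc a A k P) (.acc a A k Q) (.acc a A k R)
  | srv : Merge P Q R → Merge (.srv a A k P) (.srv a A k Q) (.srv a A k R)
  | bcastOut : Merge P Q R →
      Merge (.bcastOut k A Bs q e P) (.bcastOut k A Bs q e Q) (.bcastOut k A Bs q e R)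
  | bcastIn : Merge P Q R →
      Merge (.bcastIn k B A x P) (.bcastIn k B A x Q) (.bcastIn k B A x R)
  | redIn : Merge P Q R →
      Merge (.redIn k As B q x op P) (.redIn k As B q x op Q) (.redIn k As B q x op R)
  | redOut : Merge P Q R →
      Merge (.redOut k A B e P) (.redOut k A B e Q) (.redOut k A B e R)
  | selOut : Merge P Q R →
      Merge (.selOut k A Bs q l P) (.selOut k A Bs q l Q) (.selOut k A Bs q l R)
  | waitIn : Merge P Q R →
      Merge (.waitIn k As B op x P) (.waitIn k As B op x Q) (.waitIn k As B op x R)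
  | waitOut : Merge P Q R →
      Merge (.waitOut k A Bs P) (.waitOut k A Bs Q) (.waitOut k A Bs R)
  | cond : Merge P1 Q1 R1 → Merge P2 Q2 R2 →
      Merge (.cond e P1 P2) (.cond e Q1 Q2) (.cond e R1 R2)
  | par : Merge P1 Q1 R1 → Merge P2 Q2 R2 →
      Merge (.par P1 P2) (.par Q1 Q2) (.par R1 R2)
  | res : Merge P Q R → Merge (.res r P) (.res r Q) (.res r R)

/-- Iterated merge ⊔ of a list of processes. -/
inductive MergeList : List EP → EP → Prop
  | nil : MergeList [] .inact
  | single (P) : MergeList [P] P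
  | cons : MergeList Ps Q → Merge P Q R → MergeList (P :: Ps) R

-- ===================== Pruning =====================
/-- Parallel compositions of replicated services. -/
inductive RepSrvs : EP → Prop
  | inact : RepSrvs .inact
  | srv (a A k P) : RepSrvs (.srv a A k P)
  | par : RepSrvs P → RepSrvs Q → RepSrvs (.par P Q)

/-- Service channels offered by a composition of replicated services. -/
def srvChans : EP → Finset SvcChan
  | .srv a _ _ _ => {a}
  | .par P Q => srvChans P ∪ srvChans Q
  | _ => ∅

/-- One unfolding of the pruning relation. -/
def PruneStep (R : EP → EP → Prop) (P Q : EP) : Prop :=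
  ∃ Q0 S, EEquiv Q (.par Q0 S) ∧ RepSrvs S ∧
    (∀ μ Q0', EStep Q0 μ Q0' → ∃ P', EStep P μ P' ∧ R P' Q0') ∧
    (∀ a ∈ srvChans S, ¬ FreeName a Q0) ∧
    Merge P Q0 Q0

/-- The pruning relation P ≺ Q (largest relation closed under `PruneStep`). -/
def Prune (P Q : EP) : Prop :=
  ∃ R : EP → EP → Prop, (∀ X Y, R X Y → PruneStep R X Y) ∧ R P Q

-- ===================== Free threads, sessions, services of a choreography =====================
def GChor.fthreads : GChor → Finset AThread
  | .act (.init as ss _ _) C => as.toFinset ∪ (C.fthreads \ ss.toFinset)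
  | .act (.bcast s rs _ _ _) C => insert s (rs.map (·.1)).toFinset ∪ C.fthreads
  | .act (.reduce ss r _ _ _ _) C => insert r (ss.map (·.1)).toFinset ∪ C.fthreads
  | .act (.sel s rs _ _ _) C => insert s rs.toFinset ∪ C.fthreads
  | .cond _ _ C1 C2 => C1.fthreads ∪ C2.fthreads
  | .inact => ∅
  | .res r C => C.fthreads.filter (fun p => p.t ≠ r)

def GChor.fsessions : GChor → Finset Session
  | .act (.init _ _ _ k) C => C.fsessions.erase k
  | .act η C => insert η.keyI C.fsessions
  | .cond _ _ C1 C2 => C1.fsessions ∪ C2.fsessions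
  | .inact => ∅
  | .res r C => C.fsessions.erase r

def GChor.svcs : GChor → Finset SvcChan
  | .act (.init _ _ a _) C => insert a C.svcs
  | .act _ C => C.svcs
  | .cond _ _ C1 C2 => C1.svcs ∪ C2.svcs
  | .inact => ∅
  | .res r C => C.svcs.erase r

def GChor.rolesG : GChor → Finset Role
  | .act η C => η.rolesI ∪ C.rolesG
  | .cond _ _ C1 C2 => C1.rolesG ∪ C2.rolesG
  | .inact => ∅
  | .res _ C => C.rolesG

/-- Service threads started on channel a playing role A (the service merge set). -/
def GChor.srvThreads : GChor → SvcChan → Role → Finset AThread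
  | .act (.init _ ss a' _) C, a, A =>
      (if a' = a then (ss.filter (fun p => p.role = A)).toFinset else ∅) ∪ C.srvThreads a A
  | .act _ C, a, A => C.srvThreads a A
  | .cond _ _ C1 C2, a, A => C1.srvThreads a A ∪ C2.srvThreads a A
  | .inact, _, _ => ∅
  | .res _ C, a, A => C.srvThreads a A
-- ===================== Thread projection and endpoint projection =====================
/-- Thread projection ⟦C⟧_p of a choreography at an annotated thread. -/
inductive Proj : GChor → AThread → EP → Prop
  | inact (p) : Proj .inact p .inact
  | initHead {p : AThread} {as ss : List AThread} {a : SvcChan} {k : Session} {C : GChor} {P : EP} :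
      Proj C p P →
      Proj (.act (.init (p :: as) ss a k) C) p
        (.req a ((p :: (as ++ ss)).map (·.role)) k P)
  | initActive {p p0 : AThread} {as ss : List AThread} {a : SvcChan} {k : Session} {C : GChor} {P : EP} :
      p ∈ as → Proj C p P →
      Proj (.act (.init (p0 :: as) ss a k) C) p (.acc a p.role k P)
  | initSrv {p : AThread} {as ss : List AThread} {a : SvcChan} {k : Session} {C : GChor} {P : EP} :
      p ∈ ss → Proj C p P →
      Proj (.act (.init as ss a k) C) p (.srv a p.role k P)
  | initSkip {p : AThread} {as ss : List AThread} {a : SvcChan} {k : Session} {C : GChor} {P : EP} :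
      p ∉ as → p ∉ ss → Proj C p P →
      Proj (.act (.init as ss a k) C) p P
  | bcastS {p : AThread} {rs : List (AThread × Var)} {q : QPred} {e : Expr} {k : Session}
      {C : GChor} {P : EP} :
      Proj C p P →
      Proj (.act (.bcast p rs q e k) C) p (.bcastOut k p.role (rs.map (·.1.role)) q e P)
  | bcastR {p s : AThread} {x : Var} {rs : List (AThread × Var)} {q : QPred} {e : Expr}
      {k : Session} {C : GChor} {P : EP} :
      (p, x) ∈ rs → Proj C p P →
      Proj (.act (.bcast s rs q e k) C) p (.bcastIn k p.role s.role x P)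
  | bcastSkip {p s : AThread} {rs : List (AThread × Var)} {q : QPred} {e : Expr}
      {k : Session} {C : GChor} {P : EP} :
      p ≠ s → (∀ x, (p, x) ∉ rs) → Proj C p P →
      Proj (.act (.bcast s rs q e k) C) p P
  | redS {p r : AThread} {e : Expr} {ss : List (AThread × Expr)} {x : Var} {q : QPred}
      {k : Session} {op : AggOp} {C : GChor} {P : EP} :
      (p, e) ∈ ss → Proj C p P →
      Proj (.act (.reduce ss r x q k op) C) p (.redOut k p.role r.role e P)
  | redR {p : AThread} {ss : List (AThread × Expr)} {x : Var} {q : QPred}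
      {k : Session} {op : AggOp} {C : GChor} {P : EP} :
      Proj C p P →
      Proj (.act (.reduce ss p x q k op) C) p
        (.redIn k (ss.map (·.1.role)) p.role q x op P)
  | redSkip {p r : AThread} {ss : List (AThread × Expr)} {x : Var} {q : QPred}
      {k : Session} {op : AggOp} {C : GChor} {P : EP} :
      p ≠ r → (∀ e, (p, e) ∉ ss) → Proj C p P →
      Proj (.act (.reduce ss r x q k op) C) p P
  | selS {p : AThread} {rs : List AThread} {q : QPred} {k : Session} {l : MLabel}
      {C : GChor} {P : EP} :
      Proj C p P →
      Proj (.act (.sel p rs q k l) C) p (.selOut k p.role (rs.map (·.role)) q l P)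
  | selR {p s : AThread} {rs : List AThread} {q : QPred} {k : Session} {l : MLabel}
      {C : GChor} {P : EP} :
      p ∈ rs → Proj C p P →
      Proj (.act (.sel s rs q k l) C) p (.branchIn k p.role s.role [(l, P)])
  | selSkip {p s : AThread} {rs : List AThread} {q : QPred} {k : Session} {l : MLabel}
      {C : GChor} {P : EP} :
      p ≠ s → p ∉ rs → Proj C p P →
      Proj (.act (.sel s rs q k l) C) p P
  | condAt {p : AThread} {e : Expr} {C1 C2 : GChor} {P1 P2 : EP} :
      Proj C1 p P1 → Proj C2 p P2 →
      Proj (.cond e p.t C1 C2) p (.cond e P1 P2)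
  | condOther {p : AThread} {t : TName} {e : Expr} {C1 C2 : GChor} {P1 P2 R : EP} :
      p.t ≠ t → Proj C1 p P1 → Proj C2 p P2 → Merge P1 P2 R →
      Proj (.cond e t C1 C2) p R

/-- l enumerates the finite set s. -/
def Enumerates {α : Type} [DecidableEq α] (l : List α) (s : Finset α) : Prop :=
  l.Nodup ∧ ∀ x, x ∈ l ↔ x ∈ s

/-- Body of the endpoint projection of a restriction-free choreography C₁:
the parallel composition of the thread projections of all free threads,
empty queues for all free session channels, and, for every service channel
and role, the merged projections of the corresponding service threads. -/
def EPPBody (C1 : GChor) (P : EP) : Prop :=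
  ∃ (ts : List AThread) (Ps : List EP) (ks : List Session)
    (pairs : List (SvcChan × Role)) (Ss : List EP),
    Enumerates ts C1.fthreads ∧
    List.Forall₂ (fun t Q => Proj C1 t Q) ts Ps ∧
    Enumerates ks C1.fsessions ∧
    Enumerates pairs (C1.svcs ×ˢ C1.rolesG) ∧
    List.Forall₂ (fun (pr : SvcChan × Role) (S : EP) =>
      ∃ (ss : List AThread) (Qs : List EP),
        Enumerates ss (C1.srvThreads pr.1 pr.2) ∧
        List.Forall₂ (fun t Q => Proj C1 t Q) ss Qs ∧
        MergeList Qs S) pairs Ss ∧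
    P = .par (parList Ps)
          (.par (parList (ks.map (fun k => EP.queue k []))) (parList Ss))

/-- Endpoint projection ⟦(νk̃)C₁⟧ of a restriction-free choreography body C₁
under the session restrictions k̃. -/
def EPPAt (ks : List Session) (C1 : GChor) (P : EP) : Prop :=
  ∃ (ts : List AThread) (Ps : List EP) (qs : List Session)
    (pairs : List (SvcChan × Role)) (Ss : List EP),
    Enumerates ts C1.fthreads ∧
    List.Forall₂ (fun t Q => Proj C1 t Q) ts Ps ∧
    Enumerates qs C1.fsessions ∧
    Enumerates pairs (C1.svcs ×ˢ C1.rolesG) ∧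
    List.Forall₂ (fun (pr : SvcChan × Role) (S : EP) =>
      ∃ (ss : List AThread) (Qs : List EP),
        Enumerates ss (C1.srvThreads pr.1 pr.2) ∧
        List.Forall₂ (fun t Q => Proj C1 t Q) ss Qs ∧
        MergeList Qs S) pairs Ss ∧
    P = .par (EP.resList ks
                (.par (parList Ps) (parList (qs.map (fun k => EP.queue k [])))))
          (parList Ss)

/-- Endpoint projection ⟦C⟧ of a choreography C = (νk̃,p̃)C₁ with C₁ restriction-free. -/
def EPPc (C : GChor) (P : EP) : Prop :=
  ∃ (ks ps : List ℕ) (C1 : GChor),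
    C = GChor.resList (ks ++ ps) C1 ∧ RFree C1 ∧ EPPAt ks C1 P
-- ===================== Behavioural implementation ℓ̃ ▷ μ̃ =====================
/-- The behavioural-implementation judgment relating sequences of choreography
labels to sequences of endpoint labels (rules L|init, L|Bcast, L|Red, L|Sel,
L|Comm, L|Tau, L|Empty). -/
inductive BImpl : List GLabel → List ELabel → Prop
  | empty : BImpl [] []
  | tau : BImpl ls ms → BImpl (.tau :: ls) (.tau :: ms)
  | comm : BImpl ls (ms1 ++ m' :: m :: ms2) → BImpl ls (ms1 ++ m :: m' :: ms2)
  | init {as ss : List AThread} {a : SvcChan} {k : Session} {ls : List GLabel}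
      {ms : List ELabel} :
      BImpl ls ms →
      BImpl (GLabel.act (.init as ss a k) :: ls)
        (ELabel.start (as.map (·.role)) (ss.map (·.role)) a k :: ms)
  | bcast {s : AThread} {rs J : List (AThread × Var)} {q : QPred} {e : Expr}
      {k : Session} {sb : OptData} {ls : List GLabel} {ms : List ELabel} :
      List.Sublist J rs →
      q.holds (rs.map (fun r => decide (r ∈ J))) →
      BImpl ls ms →
      BImpl (GLabel.act (.bcast s rs q e k) :: ls)
        (ELabel.bcastO s.role (rs.map (·.1.role)) q k sb ::
          (J.map (fun r => ELabel.bcastI s.role r.1.role k sb) ++ [ELabel.enqO] ++ ms))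
  | reduce {ss J : List (AThread × Expr)} {r : AThread} {x : Var} {q : QPred}
      {k : Session} {op : AggOp} {sbs : List OptData} {sb : OptData}
      {ls : List GLabel} {ms : List ELabel} :
      List.Sublist J ss →
      q.holds (ss.map (fun sr => decide (sr ∈ J))) →
      op sbs = sb →
      BImpl ls ms →
      BImpl (GLabel.act (.reduce ss r x q k op) :: ls)
        (ELabel.redI (ss.map (·.1.role)) r.role q k sb ::
          ((J.zip sbs).map (fun p => ELabel.redO p.1.1.role r.role k p.2) ++
            [ELabel.enqI] ++ ms))
  | sel {s : AThread} {rs J : List AThread} {q : QPred} {k : Session} {l : MLabel}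
      {ls : List GLabel} {ms : List ELabel} :
      List.Sublist J rs →
      q.holds (rs.map (fun r => decide (r ∈ J))) →
      BImpl ls ms →
      BImpl (GLabel.act (.sel s rs q k l) :: ls)
        (ELabel.selO s.role (rs.map (·.role)) q k l ::
          (J.map (fun r => ELabel.selI s.role r.role k l) ++ [ELabel.enqO] ++ ms))

-- ===================== Linearity =====================
/-- Occurrence of an interaction in a choreography. -/
inductive InC : GChor → Interact → Prop
  | here : InC (.act η C) η
  | there : InC C η' → InC (.act η C) η'
  | condL : InC C1 η → InC (.cond e p C1 C2) η
  | condR : InC C2 η → InC (.cond e p C1 C2) η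
  | res : InC C η → InC (.res r C) η

/-- Precedence n₁ ≺ n₂: η₁ precedes η₂ along a branch of C. -/
inductive Prec : GChor → Interact → Interact → Prop
  | here : InC C η₂ → Prec (.act η₁ C) η₁ η₂
  | there : Prec C η₁ η₂ → Prec (.act η C) η₁ η₂
  | condL : Prec C1 η₁ η₂ → Prec (.cond e p C1 C2) η₁ η₂
  | condR : Prec C2 η₁ η₂ → Prec (.cond e p C1 C2) η₁ η₂
  | res : Prec C η₁ η₂ → Prec (.res r C) η₁ η₂

def isInitI : Interact → Prop
  | .init _ _ _ _ => True
  | _ => False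

def activesOf : Interact → Finset TName
  | .init as _ _ _ => (as.map (·.t)).toFinset
  | _ => ∅

def senderOf : Interact → Finset TName
  | .bcast s _ _ _ _ => {s.t}
  | .sel s _ _ _ _ => {s.t}
  | _ => ∅

def redSenders : Interact → Finset TName
  | .reduce ss _ _ _ _ _ => (ss.map (·.1.t)).toFinset
  | _ => ∅

def redRecv : Interact → Finset TName
  | .reduce _ r _ _ _ _ => {r.t}
  | _ => ∅

def manyRecvs : Interact → Finset TName
  | .bcast _ rs _ _ _ => (rs.map (·.1.t)).toFinset
  | .sel _ rs _ _ _ => (rs.map (·.t)).toFinset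
  | _ => ∅

/-- Interaction dependency n₁ ≺_p n₂. -/
def Dep (p : TName) (η₁ η₂ : Interact) : Prop :=
  (isInitI η₁ ∧ p ∈ η₁.threadsI ∧ p ∈ senderOf η₂) ∨
  (isInitI η₁ ∧ p ∈ η₁.threadsI ∧ p ∈ redSenders η₂) ∨
  (isInitI η₁ ∧ p ∈ η₁.threadsI ∧ p ∈ activesOf η₂) ∨
  (p ∈ redRecv η₁ ∧ p ∈ η₂.threadsI) ∨
  (p ∈ manyRecvs η₁ ∧ p ∈ η₂.threadsI)

/-- A chain of interaction dependencies n₁ ≺_p ⋯ ≺_r n₂ within C,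
starting at process p and ending at process r. -/
inductive DepChain (C : GChor) : TName → Interact → Interact → TName → Prop
  | single : Prec C η₁ η₂ → Dep p η₁ η₂ → DepChain C p η₁ η₂ p
  | step : Prec C η₁ η → Dep p η₁ η → DepChain C q η η₂ r → DepChain C p η₁ η₂ r

/-- Linearity of a choreography: any two causally ordered session initiations
on the same service channel are connected by chains of interaction dependencies
covering every active process of the later one. -/
def Linear (C : GChor) : Prop :=
  ∀ (as ss as' ss' : List AThread) (a : SvcChan) (k k' : Session),
    Prec C (.init as ss a k) (.init as' ss' a k') →
    ∀ r ∈ as'.map (·.t), ∃ p ∈ (as ++ ss).map (·.t),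
      DepChain C p (.init as ss a k) (.init as' ss' a k') r

-- ===================== Counting enabled service accepts =====================
/-- Number of occurrences of sub-terms a[A](k).P or !a[A](k).P in a process
(i.e. occurrences in which a[A] is enabled). -/
inductive SvcCount (a : SvcChan) (A : Role) : EP → ℕ → Prop
  | inact : SvcCount a A .inact 0
  | queue : SvcCount a A (.queue k h) 0
  | req : SvcCount a A P n → SvcCount a A (.req a' rs k P) n
  | accEq : SvcCount a A P n → SvcCount a A (.acc a A k P) (n + 1)
  | accNe : ¬ (a' = a ∧ A' = A) → SvcCount a A P n → SvcCount a A (.acc a' A' k P) n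
  | srvEq : SvcCount a A P n → SvcCount a A (.srv a A k P) (n + 1)
  | srvNe : ¬ (a' = a ∧ A' = A) → SvcCount a A P n → SvcCount a A (.srv a' A' k P) n
  | bcastOut : SvcCount a A P n → SvcCount a A (.bcastOut k B Bs q e P) n
  | bcastIn : SvcCount a A P n → SvcCount a A (.bcastIn k B B' x P) n
  | redIn : SvcCount a A P n → SvcCount a A (.redIn k As B q x op P) n
  | redOut : SvcCount a A P n → SvcCount a A (.redOut k B B' e P) n
  | selOut : SvcCount a A P n → SvcCount a A (.selOut k B Bs q l P) n
  | branchIn : List.Forall₂ (SvcCount a A) (ls.map Prod.snd) ns →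
      SvcCount a A (.branchIn k B B' ls) ns.sum
  | waitIn : SvcCount a A P n → SvcCount a A (.waitIn k As B op x P) n
  | waitOut : SvcCount a A P n → SvcCount a A (.waitOut k B Bs P) n
  | cond : SvcCount a A P n → SvcCount a A Q m → SvcCount a A (.cond e P Q) (n + m)
  | par : SvcCount a A P n → SvcCount a A Q m → SvcCount a A (.par P Q) (n + m)
  | res : SvcCount a A P n → SvcCount a A (.res r P) n

/-- a[A] is enabled in P. -/
def Enabled (a : SvcChan) (A : Role) (P : EP) : Prop :=
  (∃ k Q, Contains P (EP.acc a A k Q)) ∨ (∃ k Q, Contains P (EP.srv a A k Q))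

-- ===================== Free output/input subjects =====================
/-- Q contains an action with free subject k[A]![B̃] (a broadcast output or a
collective selection). -/
def HasFreeOut (Q : EP) (k : Session) (A : Role) (Bs : List Role) : Prop :=
  ∃ Q', ContainsFree k Q Q' ∧
    ((∃ q e P, Q' = EP.bcastOut k A Bs q e P) ∨ (∃ q l P, Q' = EP.selOut k A Bs q l P))

/-- Q contains an action with free subject k[Ã]?[B] (a reduce input). -/
def HasFreeRedIn (Q : EP) (k : Session) (As : List Role) (B : Role) : Prop :=
  ∃ Q', ContainsFree k Q Q' ∧ ∃ q x op P, Q' = EP.redIn k As B q x op P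

namespace CapTyped

theorem res_iff {Ψ : List LFormula} {x : ℕ} {C : GChor} :
    CapTyped Ψ (.res x C) ↔ CapTyped Ψ C :=
  ⟨fun | .res h => h, .res⟩

theorem cond_iff {Ψ : List LFormula} {e : Expr} {p : TName} {C1 C2 : GChor} :
    CapTyped Ψ (.cond e p C1 C2) ↔ CapTyped Ψ C1 ∧ CapTyped Ψ C2 :=
  ⟨fun | .cond h1 h2 => ⟨h1, h2⟩, fun ⟨h1, h2⟩ => .cond h1 h2⟩

theorem act_mono {η : Interact} {C C' : GChor} (hC : ∀ Ψ, CapTyped Ψ C → CapTyped Ψ C')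
    {Ψ : List LFormula} : CapTyped Ψ (.act η C) → CapTyped Ψ (.act η C')
  | .init hss hk hcont => .init hss hk (hC _ hcont)
  | .bcast split hex hprov hcont => .bcast split hex hprov fun J hJ hq => hC _ (hcont J hJ hq)
  | .reduce split hex hprov hcont => .reduce split hex hprov fun J hJ hq => hC _ (hcont J hJ hq)
  | .sel split hex hprov hcont => .sel split hex hprov fun J hJ hq => hC _ (hcont J hJ hq)

end CapTyped

theorem StructCong.capTyped_iff {C C' : GChor} (hc : StructCong C C') (Ψ : List LFormula) :
    CapTyped Ψ C ↔ CapTyped Ψ C' := by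
  induction hc generalizing Ψ with
  | refl => rfl
  | symm _ ih => exact (ih Ψ).symm
  | trans _ _ ih₁ ih₂ => exact (ih₁ Ψ).trans (ih₂ Ψ)
  | resComm => simp only [CapTyped.res_iff]
  | resInact => exact CapTyped.res_iff
  | actCong _ ih =>
    exact ⟨CapTyped.act_mono fun Ψ => (ih Ψ).mp, CapTyped.act_mono fun Ψ => (ih Ψ).mpr⟩
  | condCong _ _ ih₁ ih₂ => simp only [CapTyped.cond_iff, ih₁, ih₂]
  | resCong _ ih => simp only [CapTyped.res_iff, ih]

/-- **Subject Congruence for capability typing.**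
If C ≡ C' and Ψ ⊢ C, then Ψ ⊢ C'. -/
theorem capability_subject_congruence {C C' : GChor} {Ψ : List LFormula}
    (hc : StructCong C C') (h : CapTyped Ψ C) :
    CapTyped Ψ C' :=
  (hc.capTyped_iff Ψ).mp h
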